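/- arXiv:1603.09120 — 6 statements merged into one kernel-verified Lean document; each statement's English description precedes it below -/
import Mathlib

section
/- For the Boolean function defining the n-party Svetlichny game with coefficients c0,...,cn, fixing the output x_n = x' and input X_n = X' of the n-th party yields a winning condition that is again a Svetlichny-form game on n-1 parties: ⊕_{i<n} x_i ⊕ (c0 ⊕ x' ⊕ c_n X') = ⊕_{i<j<n} X_i X_j ⊕ ⊕_{i<n} (c_i ⊕ X') X_i. That is, the class of Svetlichny game winning conditions is closed under restriction of one party's input and output. -/
open Finset

/-- Winning condition of the `n`-party Svetlichny game with coefficients `c0, c`. -/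
def svetCond (n : ℕ) (c0 : ZMod 2) (c : Fin n → ZMod 2) (x X : Fin n → ZMod 2) : Prop :=
  (∑ i, x i) + c0 =
    (∑ i, ∑ j, if i < j then X i * X j else 0) + ∑ i, c i * X i

/-- Fixing the last party's output `x'` and input `X'` in an `(n+1)`-party Svetlichny
game yields the `n`-party Svetlichny game with constant `c0 ⊕ x' ⊕ c_n X'` and
coefficients `c_i ⊕ X'`. -/
theorem stmt_5 (n : ℕ) (c0 : ZMod 2) (c : Fin (n + 1) → ZMod 2)
    (x X : Fin n → ZMod 2) (x' X' : ZMod 2) :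
    svetCond (n + 1) c0 c (Fin.snoc x x') (Fin.snoc X X') ↔
      svetCond n (c0 + x' + c (Fin.last n) * X')
        (fun i => c i.castSucc + X') x X := by
  simp only [svetCond, Fin.sum_univ_castSucc, Fin.snoc_castSucc, Fin.snoc_last,
    Fin.castSucc_lt_castSucc_iff, Fin.castSucc_lt_last, lt_irrefl, if_true, if_false,
    not_lt_of_gt, Finset.sum_const_zero, add_mul, Finset.sum_add_distrib,
    ← Finset.sum_mul, ← Finset.mul_sum]
  constructor <;> intro h
  · linear_combination h + c (Fin.last n) * X' * CharTwo.add_self_eq_zero (1 : ZMod 2)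
  · linear_combination h - c (Fin.last n) * X' * CharTwo.add_self_eq_zero (1 : ZMod 2)
end

section
/- For the 3-party Svetlichny game S_3 (winning condition x1 ⊕ x2 ⊕ x3 = X1·X2 ⊕ X2·X3 ⊕ X3·X1 with uniform inputs), every local deterministic strategy, where each x_i is a function of X_i alone, wins with probability at most 3/4, and this bound is achieved. -/
lemma aux9 : ∀ f1 f2 f3 : Bool → Bool,
    ((Finset.univ.filter
      (fun p : Bool × Bool × Bool =>
        Bool.xor (Bool.xor (f1 p.1) (f2 p.2.1)) (f3 p.2.2) =
          Bool.xor (Bool.xor (p.1 && p.2.1) (p.2.1 && p.2.2)) (p.2.2 && p.1))).card ≤ 6) := by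
  decide

/-- Every local deterministic strategy wins the 3-party Svetlichny game `S_3` with
probability at most `3/4`, and this bound is achieved. -/
theorem stmt_9 :
    (∀ f1 f2 f3 : Bool → Bool,
      (1/8 : ℝ) * ((Finset.univ.filter
        (fun p : Bool × Bool × Bool =>
          Bool.xor (Bool.xor (f1 p.1) (f2 p.2.1)) (f3 p.2.2) =
            Bool.xor (Bool.xor (p.1 && p.2.1) (p.2.1 && p.2.2)) (p.2.2 && p.1))).card : ℝ)
        ≤ 3/4) ∧
    (∃ f1 f2 f3 : Bool → Bool,
      (1/8 : ℝ) * ((Finset.univ.filter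
        (fun p : Bool × Bool × Bool =>
          Bool.xor (Bool.xor (f1 p.1) (f2 p.2.1)) (f3 p.2.2) =
            Bool.xor (Bool.xor (p.1 && p.2.1) (p.2.1 && p.2.2)) (p.2.2 && p.1))).card : ℝ)
        = 3/4) := by
  constructor
  · intro f1 f2 f3
    have h := aux9 f1 f2 f3
    have : ((Finset.univ.filter
        (fun p : Bool × Bool × Bool =>
          Bool.xor (Bool.xor (f1 p.1) (f2 p.2.1)) (f3 p.2.2) =
            Bool.xor (Bool.xor (p.1 && p.2.1) (p.2.1 && p.2.2)) (p.2.2 && p.1))).card : ℝ) ≤ 6 := by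
      exact_mod_cast h
    linarith
  · refine ⟨fun _ => false, fun _ => false, id, ?_⟩
    have : ((Finset.univ.filter
        (fun p : Bool × Bool × Bool =>
          Bool.xor (Bool.xor ((fun _ => false) p.1) ((fun _ => false) p.2.1)) (id p.2.2) =
            Bool.xor (Bool.xor (p.1 && p.2.1) (p.2.1 && p.2.2)) (p.2.2 && p.1))).card = 6) := by
      decide
    rw [this]
    norm_num
end

section
/- For the 3-party Mermin game MI_3 (winning condition x1 ⊕ x2 ⊕ x3 = X1·X2·X3 with uniform inputs), every local deterministic strategy wins with probability at most 7/8, and this bound is achieved. -/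
lemma aux_card : ∀ f1 f2 f3 : Bool → Bool,
    (Finset.univ.filter
      (fun p : Bool × Bool × Bool =>
        Bool.xor (Bool.xor (f1 p.1) (f2 p.2.1)) (f3 p.2.2) =
          (p.1 && p.2.1 && p.2.2))).card ≤ 7 := by decide

/-- Every local deterministic strategy wins the 3-party Mermin game `MI_3` with
probability at most `7/8`, and this bound is achieved. -/
theorem stmt_10 :
    (∀ f1 f2 f3 : Bool → Bool,
      (1/8 : ℝ) * ((Finset.univ.filter
        (fun p : Bool × Bool × Bool =>
          Bool.xor (Bool.xor (f1 p.1) (f2 p.2.1)) (f3 p.2.2) =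
            (p.1 && p.2.1 && p.2.2))).card : ℝ)
        ≤ 7/8) ∧
    (∃ f1 f2 f3 : Bool → Bool,
      (1/8 : ℝ) * ((Finset.univ.filter
        (fun p : Bool × Bool × Bool =>
          Bool.xor (Bool.xor (f1 p.1) (f2 p.2.1)) (f3 p.2.2) =
            (p.1 && p.2.1 && p.2.2))).card : ℝ)
        = 7/8) := by
  constructor
  · intro f1 f2 f3
    have h := aux_card f1 f2 f3
    have : ((Finset.univ.filter
        (fun p : Bool × Bool × Bool =>
          Bool.xor (Bool.xor (f1 p.1) (f2 p.2.1)) (f3 p.2.2) =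
            (p.1 && p.2.1 && p.2.2))).card : ℝ) ≤ 7 := by exact_mod_cast h
    linarith
  · refine ⟨fun _ => false, fun _ => false, fun _ => false, ?_⟩
    have h : (Finset.univ.filter
        (fun p : Bool × Bool × Bool =>
          Bool.xor (Bool.xor false false) false =
            (p.1 && p.2.1 && p.2.2))).card = 7 := by decide
    rw [h]; norm_num
end

section
/- Let P(x1,x2|X1,X2) be a no-signaling two-party binary box, and let S2^i be the CHSH game x1 ⊕ x2 = X1·X2 and S2^j be the game x1 ⊕ x2 = X1·X2 ⊕ X1 (which is neither equivalent nor trivially complementary to S2^i). If the winning probability of S2^i is p ≥ 1/2, then the winning probability of S2^j is at most 3/2 - p. -/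
open Finset

/-- No-signaling for a two-party binary box `P x1 x2 X1 X2 = P(x1 x2 | X1 X2)`:
each party's marginal is independent of the other party's input. -/
def NS2 (P : Bool → Bool → Bool → Bool → ℝ) : Prop :=
  (∀ x1 X1 X2 X2', (∑ x2 : Bool, P x1 x2 X1 X2) = ∑ x2 : Bool, P x1 x2 X1 X2') ∧
  (∀ x2 X2 X1 X1', (∑ x1 : Bool, P x1 x2 X1 X2) = ∑ x1 : Bool, P x1 x2 X1' X2)

/-- Winning probability of a two-party XOR-type game with winning predicate `W`
under uniform inputs. -/
noncomputable def pwin2 (W : Bool → Bool → Bool → Bool → Bool)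
    (P : Bool → Bool → Bool → Bool → ℝ) : ℝ :=
  (1/4) * ∑ X1 : Bool, ∑ X2 : Bool, ∑ x1 : Bool, ∑ x2 : Bool,
    if W x1 x2 X1 X2 then P x1 x2 X1 X2 else 0


/-- For a no-signaling two-party box winning CHSH (`x1 ⊕ x2 = X1·X2`) with probability
`p ≥ 1/2`, the inequivalent, non-complementary game `x1 ⊕ x2 = X1·X2 ⊕ X1` is won with
probability at most `3/2 - p`. -/
theorem stmt_13 (P : Bool → Bool → Bool → Bool → ℝ) (p : ℝ)
    (hpos : ∀ x1 x2 X1 X2, 0 ≤ P x1 x2 X1 X2)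
    (hsum : ∀ X1 X2, (∑ x1 : Bool, ∑ x2 : Bool, P x1 x2 X1 X2) = 1)
    (hns : NS2 P)
    (hp : pwin2 (fun x1 x2 X1 X2 => Bool.xor x1 x2 == (X1 && X2)) P = p)
    (hhalf : 1/2 ≤ p) :
    pwin2 (fun x1 x2 X1 X2 => Bool.xor x1 x2 == Bool.xor (X1 && X2) X1) P ≤ 3/2 - p := by
  have h1 := hsum false false
  have h2 := hsum false true
  have h3 := hsum true false
  have h4 := hsum true true
  have ha := hpos false false false false
  have hb := hpos false true false false
  have hc := hpos true false false false
  have hd := hpos true true false false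
  have ha' := hpos false false false true
  have hb' := hpos false true false true
  have hc' := hpos true false false true
  have hd' := hpos true true false true
  simp only [pwin2, Fintype.sum_bool] at hp ⊢
  simp only [Fintype.sum_bool] at h1 h2 h3 h4
  norm_num at hp ⊢
  linarith
end

section
/- Let P(x1,x2|X1,X2) be a no-signaling two-party binary box with CHSH (x1 ⊕ x2 = X1·X2) winning probability p ≤ 1/2. Then the winning probability of the game x1 ⊕ x2 = X1·X2 ⊕ X1 is at most p + 1/2. -/
open Finset

/-- For a no-signaling two-party box winning CHSH with probability `p ≤ 1/2`, the game
`x1 ⊕ x2 = X1·X2 ⊕ X1` is won with probability at most `p + 1/2`. -/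
theorem stmt_14 (P : Bool → Bool → Bool → Bool → ℝ) (p : ℝ)
    (hpos : ∀ x1 x2 X1 X2, 0 ≤ P x1 x2 X1 X2)
    (hsum : ∀ X1 X2, (∑ x1 : Bool, ∑ x2 : Bool, P x1 x2 X1 X2) = 1)
    (hns : NS2 P)
    (hp : pwin2 (fun x1 x2 X1 X2 => Bool.xor x1 x2 == (X1 && X2)) P = p)
    (hhalf : p ≤ 1/2) :
    pwin2 (fun x1 x2 X1 X2 => Bool.xor x1 x2 == Bool.xor (X1 && X2) X1) P ≤ p + 1/2 := by
  subst hp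
  have h1 := hsum true false
  have h2 := hsum true true
  simp only [pwin2, Fintype.sum_bool] at *
  norm_num at *
  linarith [hpos.1.1.2.1, hpos.1.1.2.2, hpos.1.2.2.1, hpos.1.2.2.2,
    hpos.2.1.2.1, hpos.2.1.2.2, hpos.2.2.2.1, hpos.2.2.2.2]
end

section
/- Suppose P is a no-signaling two-party binary box whose party-2 marginal satisfies P(x2=0|X2=0) = P(x2=0|X2=1) = p. Then the CHSH winning probability of P is at most (3+2p)/4 if p ≤ 1/2, and at most (5-2p)/4 if p ≥ 1/2. -/
open Finset

/-- If the party-2 marginal of a no-signaling two-party box satisfies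
`P(x2=0|X2=0) = P(x2=0|X2=1) = p`, then the CHSH winning probability is at most
`(3+2p)/4` when `p ≤ 1/2` and at most `(5-2p)/4` when `p ≥ 1/2`. -/
theorem stmt_18 (P : Bool → Bool → Bool → Bool → ℝ) (p : ℝ)
    (hpos : ∀ x1 x2 X1 X2, 0 ≤ P x1 x2 X1 X2)
    (hsum : ∀ X1 X2, (∑ x1 : Bool, ∑ x2 : Bool, P x1 x2 X1 X2) = 1)
    (hns : NS2 P)
    (hm0 : (∑ x1 : Bool, P x1 false false false) = p)
    (hm1 : (∑ x1 : Bool, P x1 false false true) = p) :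
    (p ≤ 1/2 →
      pwin2 (fun x1 x2 X1 X2 => Bool.xor x1 x2 == (X1 && X2)) P ≤ (3 + 2*p)/4) ∧
    (1/2 ≤ p →
      pwin2 (fun x1 x2 X1 X2 => Bool.xor x1 x2 == (X1 && X2)) P ≤ (5 - 2*p)/4) := by
  obtain ⟨ns1, ns2⟩ := hns
  simp only [Fintype.sum_bool] at hsum hm0 hm1 ns1 ns2
  simp only [pwin2, Fintype.sum_bool]
  norm_num
  have h1 := hsum false false
  have h2 := hsum false true
  have h3 := hsum true false
  have h4 := hsum true true
  have n1 := ns2 false false false true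
  have n2 := ns2 false true false true
  have n3 := ns2 true false false true
  have n4 := ns2 true true false true
  have m1 := ns1 false false false true
  have m2 := ns1 false true false true
  have m3 := ns1 true false false true
  have m4 := ns1 true true false true
  constructor <;> intro hp <;>
    linarith [hpos false false false false, hpos false false false true, hpos false false true false, hpos false false true true, hpos false true false false, hpos false true false true, hpos false true true false, hpos false true true true, hpos true false false false, hpos true false false true, hpos true false true false, hpos true false true true, hpos true true false false, hpos true true false true, hpos true true true false, hpos true true true true]
end
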